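/- arXiv:2409.10438 — 2 statements merged into one kernel-verified Lean document; each statement's English description precedes it below -/
import Mathlib

section
/- In a preadditive category C, consider a sequence Z_{m+1} → Z_m → ⋯ → Z_1 → Z_0 which is an m-exact sequence. Then the sequence splits (i.e. the first map is a split monomorphism and the last a split epimorphism) if and only if the last map h₁ : Z_1 → Z_0 is a split epimorphism, if and only if the first map h_{m+1} is a split monomorphism. -/
open CategoryTheory CategoryTheory.Limits

namespace Paper


variable {C : Type*} [Category C] [Preadditive C]

/-- Exactness of the sequence of contravariant representable functors at interior position `i`. -/
def YExactAt {m : ℕ} (T : ComposableArrows C m) (i : ℕ) (h : i + 2 ≤ m) : Prop :=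
  T.map' i (i+1) (by omega) (by omega) ≫ T.map' (i+1) (i+2) (by omega) h = 0 ∧
  ∀ (W : C) (u : W ⟶ T.obj' (i+1) (by omega)),
    u ≫ T.map' (i+1) (i+2) (by omega) h = 0 →
      ∃ v : W ⟶ T.obj' i (by omega), v ≫ T.map' i (i+1) (by omega) (by omega) = u

/-- Exactness of the sequence of covariant representable functors at interior position `i`. -/
def CoYExactAt {m : ℕ} (T : ComposableArrows C m) (i : ℕ) (h : i + 2 ≤ m) : Prop :=
  T.map' i (i+1) (by omega) (by omega) ≫ T.map' (i+1) (i+2) (by omega) h = 0 ∧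
  ∀ (W : C) (u : T.obj' (i+1) (by omega) ⟶ W),
    T.map' i (i+1) (by omega) (by omega) ≫ u = 0 →
      ∃ v : T.obj' (i+2) h ⟶ W, T.map' (i+1) (i+2) (by omega) h ≫ v = u

/-- `T = [X_n → ⋯ → X_1 → X → Y]` is such that `X_n → ⋯ → X` is an `n`-kernel of the
last map `X ⟶ Y`, i.e. `0 → C(-,X_n) → ⋯ → C(-,X) → C(-,Y)` is exact. -/
def IsNKernelSeq (n : ℕ) (T : ComposableArrows C (n+1)) : Prop :=
  Mono (T.map' 0 1 (by omega) (by omega)) ∧ ∀ (i : ℕ) (h : i + 2 ≤ n + 1), YExactAt T i h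

/-- `T = [X → Y → Y_1 → ⋯ → Y_n]` is such that `Y → ⋯ → Y_n` is an `n`-cokernel of the
first map `X ⟶ Y`, i.e. `0 → C(Y_n,-) → ⋯ → C(Y,-) → C(X,-)` is exact. -/
def IsNCokernelSeq (n : ℕ) (T : ComposableArrows C (n+1)) : Prop :=
  Epi (T.map' n (n+1) (by omega) (by omega)) ∧ ∀ (i : ℕ) (h : i + 2 ≤ n + 1), CoYExactAt T i h

/-- `T` is an `n`-exact sequence. -/
def IsNExactSeq (n : ℕ) (T : ComposableArrows C (n+1)) : Prop :=
  IsNKernelSeq n T ∧ IsNCokernelSeq n T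

/-- The category `C` has `n`-kernels. -/
def HasNKernels (C : Type*) [Category C] [Preadditive C] (n : ℕ) : Prop :=
  ∀ ⦃X Y : C⦄ (f : X ⟶ Y), ∃ (T : ComposableArrows C (n+1))
    (hX : T.obj' n (by omega) = X) (hY : T.obj' (n+1) (by omega) = Y),
      T.map' n (n+1) (by omega) (by omega) = eqToHom hX ≫ f ≫ eqToHom hY.symm ∧
      IsNKernelSeq n T

/-- The category `C` has `n`-cokernels. -/
def HasNCokernels (C : Type*) [Category C] [Preadditive C] (n : ℕ) : Prop :=
  ∀ ⦃X Y : C⦄ (f : X ⟶ Y), ∃ (T : ComposableArrows C (n+1))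
    (hX : T.obj' 0 (by omega) = X) (hY : T.obj' 1 (by omega) = Y),
      T.map' 0 1 (by omega) (by omega) = eqToHom hX ≫ f ≫ eqToHom hY.symm ∧
      IsNCokernelSeq n T

/-- Axiom (A2): every monomorphism, together with any of its `n`-cokernels, forms an
`n`-exact sequence. -/
def AxiomA2 (C : Type*) [Category C] [Preadditive C] (n : ℕ) : Prop :=
  ∀ (T : ComposableArrows C (n+1)), Mono (T.map' 0 1 (by omega) (by omega)) →
    IsNCokernelSeq n T → IsNExactSeq n T

/-- Axiom (A2ᵒᵖ): every epimorphism, together with any of its `n`-kernels, forms an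
`n`-exact sequence. -/
def AxiomA2op (C : Type*) [Category C] [Preadditive C] (n : ℕ) : Prop :=
  ∀ (T : ComposableArrows C (n+1)), Epi (T.map' n (n+1) (by omega) (by omega)) →
    IsNKernelSeq n T → IsNExactSeq n T

/-- Jasso's axioms for an `n`-abelian category. -/
def IsNAbelian (C : Type*) [Category C] [Preadditive C] (n : ℕ) : Prop :=
  HasNKernels C n ∧ HasNCokernels C n ∧ AxiomA2 C n ∧ AxiomA2op C n

/-- `C` has weak kernels. -/
def HasWeakKernelsP (C : Type*) [Category C] [Preadditive C] : Prop :=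
  ∀ ⦃Y Z : C⦄ (g : Y ⟶ Z), ∃ (X : C) (f : X ⟶ Y), f ≫ g = 0 ∧
    ∀ ⦃W : C⦄ (u : W ⟶ Y), u ≫ g = 0 → ∃ v : W ⟶ X, v ≫ f = u

/-- `C` has weak cokernels. -/
def HasWeakCokernelsP (C : Type*) [Category C] [Preadditive C] : Prop :=
  ∀ ⦃X Y : C⦄ (f : X ⟶ Y), ∃ (Z : C) (g : Y ⟶ Z), f ≫ g = 0 ∧
    ∀ ⦃W : C⦄ (u : Y ⟶ W), f ≫ u = 0 → ∃ v : Z ⟶ W, g ≫ v = u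

/-- A category is von Neumann regular if every morphism factors as a split epimorphism
followed by a split monomorphism. -/
def VonNeumannRegular (C : Type*) [Category C] : Prop :=
  ∀ ⦃X Y : C⦄ (f : X ⟶ Y), ∃ (W : C) (p : X ⟶ W) (j : W ⟶ Y),
    IsSplitEpi p ∧ IsSplitMono j ∧ p ≫ j = f

end Paper

open Paper

/-!
Call `f` regular if `f ≫ g ≫ f = f` for some `g`. Exactness of the representable functors makes
regularity travel along an exact sequence: if `f` is a weak kernel of a regular `g` with
`g ≫ w ≫ g = g`, then `(𝟙 - g ≫ w) ≫ g = 0`, so `𝟙 - g ≫ w = w' ≫ f` and `f ≫ w' ≫ f = f`;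
dually regularity passes from `f` to a weak cokernel `g` of `f`. A split epimorphism at the end
is regular, hence so is the first map, which is a monomorphism, and a regular monomorphism is
split. The converse runs the same argument in the other direction.
-/

namespace CategoryTheory

variable {C : Type*} [Category C]

def IsVonNeumannRegular {X Y : C} (f : X ⟶ Y) : Prop :=
  ∃ g : Y ⟶ X, f ≫ g ≫ f = f

namespace IsVonNeumannRegular

variable {X Y Z : C}

lemma of_isSplitEpi (f : X ⟶ Y) [IsSplitEpi f] : IsVonNeumannRegular f :=
  ⟨section_ f, by simp⟩

lemma of_isSplitMono (f : X ⟶ Y) [IsSplitMono f] : IsVonNeumannRegular f :=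
  ⟨retraction f, by simp⟩

lemma isSplitMono {f : X ⟶ Y} [Mono f] (hf : IsVonNeumannRegular f) : IsSplitMono f := by
  obtain ⟨g, hg⟩ := hf
  exact IsSplitMono.mk' ⟨g, by rw [← cancel_mono f, Category.assoc, hg, Category.id_comp]⟩

lemma isSplitEpi {f : X ⟶ Y} [Epi f] (hf : IsVonNeumannRegular f) : IsSplitEpi f := by
  obtain ⟨g, hg⟩ := hf
  exact IsSplitEpi.mk' ⟨g, by rw [← cancel_epi f, hg, Category.comp_id]⟩

variable [Preadditive C]

lemma of_weakKernel {f : X ⟶ Y} {g : Y ⟶ Z} (hfg : f ≫ g = 0)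
    (hker : ∀ (W : C) (u : W ⟶ Y), u ≫ g = 0 → ∃ v : W ⟶ X, v ≫ f = u)
    (hg : IsVonNeumannRegular g) : IsVonNeumannRegular f := by
  obtain ⟨w, hw⟩ := hg
  obtain ⟨w', hw'⟩ := hker _ (𝟙 Y - g ≫ w) (by simp [Preadditive.sub_comp, hw])
  exact ⟨w', by simp [hw', Preadditive.comp_sub, reassoc_of% hfg]⟩

lemma of_weakCokernel {f : X ⟶ Y} {g : Y ⟶ Z} (hfg : f ≫ g = 0)
    (hcoker : ∀ (W : C) (u : Y ⟶ W), f ≫ u = 0 → ∃ v : Z ⟶ W, g ≫ v = u)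
    (hf : IsVonNeumannRegular f) : IsVonNeumannRegular g := by
  obtain ⟨w, hw⟩ := hf
  obtain ⟨w', hw'⟩ := hcoker _ (𝟙 Y - w ≫ f) (by simp [Preadditive.comp_sub, hw])
  exact ⟨w', by simp [reassoc_of% hw', Preadditive.sub_comp, hfg]⟩

end IsVonNeumannRegular

end CategoryTheory

namespace Paper

variable {C : Type*} [Category C] [Preadditive C] {n : ℕ} {T : ComposableArrows C (n + 1)}

lemma IsNKernelSeq.isVonNeumannRegular_map (hT : IsNKernelSeq n T)
    (hlast : IsVonNeumannRegular (T.map' n (n + 1))) {i : ℕ} (hi : i ≤ n) :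
    IsVonNeumannRegular (T.map' i (i + 1)) := by
  induction hi using Nat.decreasingInduction with
  | self => exact hlast
  | of_succ k hk ih =>
    obtain ⟨hzero, hlift⟩ := hT.2 k (by omega)
    exact IsVonNeumannRegular.of_weakKernel hzero hlift ih

lemma IsNCokernelSeq.isVonNeumannRegular_map (hT : IsNCokernelSeq n T)
    (hfirst : IsVonNeumannRegular (T.map' 0 1)) {i : ℕ} (hi : i ≤ n) :
    IsVonNeumannRegular (T.map' i (i + 1)) := by
  induction i with
  | zero => exact hfirst
  | succ k ih =>
    obtain ⟨hzero, hdesc⟩ := hT.2 k (by omega)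
    exact IsVonNeumannRegular.of_weakCokernel hzero hdesc (ih (by omega))

lemma IsNExactSeq.isSplitMono_of_isSplitEpi (hT : IsNExactSeq n T)
    (h : IsSplitEpi (T.map' n (n + 1))) : IsSplitMono (T.map' 0 1) :=
  have := hT.1.1
  (hT.1.isVonNeumannRegular_map (.of_isSplitEpi _) (Nat.zero_le n)).isSplitMono

lemma IsNExactSeq.isSplitEpi_of_isSplitMono (hT : IsNExactSeq n T)
    (h : IsSplitMono (T.map' 0 1)) : IsSplitEpi (T.map' n (n + 1)) :=
  have := hT.2.1
  (hT.2.isVonNeumannRegular_map (.of_isSplitMono _) le_rfl).isSplitEpi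

end Paper

/-- For an `m`-exact sequence `Z_{m+1} → ⋯ → Z_0` in a preadditive category, being split
(first map split mono and last map split epi) is equivalent to the last map being a split
epimorphism, and also to the first map being a split monomorphism. -/
theorem stmt_17 {C : Type*} [Category C] [Preadditive C] (m : ℕ)
    (T : ComposableArrows C (m + 1)) (hT : IsNExactSeq m T) :
    ((IsSplitMono (T.map' 0 1 (by omega) (by omega)) ∧
        IsSplitEpi (T.map' m (m + 1) (by omega) (by omega))) ↔
      IsSplitEpi (T.map' m (m + 1) (by omega) (by omega))) ∧
    (IsSplitEpi (T.map' m (m + 1) (by omega) (by omega)) ↔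
      IsSplitMono (T.map' 0 1 (by omega) (by omega))) :=
  ⟨⟨And.right, fun h => ⟨hT.isSplitMono_of_isSplitEpi h, h⟩⟩,
    ⟨hT.isSplitMono_of_isSplitEpi, hT.isSplitEpi_of_isSplitMono⟩⟩
end

section
/- Every n-abelian category is balanced: any morphism that is both a monomorphism and an epimorphism is an isomorphism. -/
/-! Take an `n`-cokernel `X → Y → Y₁ → ⋯ → Yₙ` of a morphism `f` that is mono and epi.
Since `f` is epi and `f ≫ (Y → Y₁) = 0`, the map `Y → Y₁` vanishes. Axiom (A2) makes the
sequence `n`-exact, so `𝟙 Y`, which is killed by `Y → Y₁`, factors through `f`: thus `f` is a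
split epimorphism, and a monic split epimorphism is an isomorphism. -/

open CategoryTheory CategoryTheory.Limits

namespace Paper

variable {C : Type*} [Category C] [Preadditive C]

theorem YExactAt.isSplitEpi_of_epi {m : ℕ} {T : ComposableArrows C m} {i : ℕ}
    {h : i + 2 ≤ m} (hT : YExactAt T i h) [Epi (T.map' i (i + 1))] :
    IsSplitEpi (T.map' i (i + 1)) := by
  have hzero : T.map' (i + 1) (i + 2) = 0 := (cancel_epi _).1 (by rw [hT.1, comp_zero])
  obtain ⟨s, hs⟩ := hT.2 _ (𝟙 _) (by rw [hzero, comp_zero])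
  exact IsSplitEpi.mk' ⟨s, hs⟩

theorem isSplitEpi_of_mono_of_epi {n : ℕ} (hn : 1 ≤ n) (hcok : HasNCokernels C n)
    (hA2 : AxiomA2 C n) {X Y : C} (f : X ⟶ Y) [Mono f] [Epi f] : IsSplitEpi f := by
  obtain ⟨T, rfl, rfl, hTf, hT⟩ := hcok f
  simp only [eqToHom_refl, Category.id_comp, Category.comp_id] at hTf
  subst hTf
  exact ((hA2 T inferInstance hT).1.2 0 (by omega)).isSplitEpi_of_epi

end Paper

open Paper

theorem stmt_18_general {C : Type*} [Category C] [Preadditive C] (n : ℕ) (hn : 1 ≤ n)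
    (h : IsNAbelian C n) {X Y : C} (f : X ⟶ Y) (hmono : Mono f) (hepi : Epi f) :
    IsIso f := by
  obtain ⟨-, hcok, hA2, -⟩ := h
  have := isSplitEpi_of_mono_of_epi hn hcok hA2 f
  exact isIso_of_mono_of_isSplitEpi f

/-- Every `n`-abelian category is balanced: a morphism which is both a monomorphism and
an epimorphism is an isomorphism. -/
theorem stmt_18 {C : Type*} [Category C] [Preadditive C] [HasZeroObject C]
    [HasFiniteBiproducts C] [IsIdempotentComplete C] (n : ℕ) (hn : 1 ≤ n)
    (h : IsNAbelian C n) {X Y : C} (f : X ⟶ Y) (hmono : Mono f) (hepi : Epi f) :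
    IsIso f :=
  stmt_18_general n hn h f hmono hepi
end
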